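/- arXiv:1406.4690 — 3 statements merged into one kernel-verified Lean document; each statement's English description precedes it below -/
import Mathlib

section
/- Truth-theoretic semantics of the possessive subject relative clause 'Possessor whose Subject Verb Object': with poss = χ_P, sbj = χ_K, obj = χ_L, verb = ∑_{i,j ∈ U} α(i,j) • (e_i ⊗ e_j) ∈ N ⊗ N, and 's : N → N the linear map with 's(e_k) = ∑_{h ∈ U, owns(h,k)} e_h, the vector μ( poss ⊗ 's( μ( sbj ⊗ (id_N ⊗ ε)(verb ⊗ obj) ) ) ) equals ∑_{h ∈ P} ( ∑_{k ∈ K} ∑_{l ∈ L} (if owns(h,k) then α(k,l) else 0) ) • e_h. -/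
open TensorProduct

noncomputable def eVec (U : Type*) [DecidableEq U] (i : U) : U → ℝ := Pi.single i 1

noncomputable def muMap (U : Type*) :
    (U → ℝ) ⊗[ℝ] (U → ℝ) →ₗ[ℝ] (U → ℝ) :=
  TensorProduct.lift (LinearMap.mul ℝ (U → ℝ))

noncomputable def epsMap (U : Type*) [Fintype U] :
    (U → ℝ) ⊗[ℝ] (U → ℝ) →ₗ[ℝ] ℝ :=
  TensorProduct.lift (LinearMap.mk₂ ℝ (fun v w => ∑ i, v i * w i)
    (fun v v' w => by simp [add_mul, Finset.sum_add_distrib])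
    (fun c v w => by simp [Finset.mul_sum, mul_assoc])
    (fun v w w' => by simp [mul_add, Finset.sum_add_distrib])
    (fun c v w => by simp [Finset.mul_sum, mul_left_comm]))

noncomputable def deltaMap (U : Type*) [Fintype U] [DecidableEq U] :
    (U → ℝ) →ₗ[ℝ] (U → ℝ) ⊗[ℝ] (U → ℝ) where
  toFun v := ∑ i, v i • (eVec U i ⊗ₜ[ℝ] eVec U i)
  map_add' v w := by simp [add_smul, Finset.sum_add_distrib]
  map_smul' c v := by simp [smul_smul, Finset.smul_sum]

noncomputable def iotaMap (U : Type*) [Fintype U] : (U → ℝ) →ₗ[ℝ] ℝ where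
  toFun v := ∑ i, v i
  map_add' v w := by simp [Finset.sum_add_distrib]
  map_smul' c v := by simp [Finset.mul_sum]

noncomputable def etaMap (U : Type*) [Fintype U] [DecidableEq U] :
    ℝ →ₗ[ℝ] (U → ℝ) ⊗[ℝ] (U → ℝ) :=
  LinearMap.toSpanSingleton ℝ _ (∑ i, eVec U i ⊗ₜ[ℝ] eVec U i)

noncomputable def zetaMap (U : Type*) [Fintype U] [DecidableEq U] :
    ℝ →ₗ[ℝ] (U → ℝ) :=
  LinearMap.toSpanSingleton ℝ _ (∑ i, eVec U i)

section Helpers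
set_option linter.unusedSectionVars false
variable {U : Type*} [Fintype U] [DecidableEq U]

lemma eVec_mul' (i j : U) : (eVec U i) * (eVec U j) = if i = j then eVec U i else 0 := by
  funext u
  simp only [Pi.mul_apply, eVec, Pi.single_apply]
  by_cases h : i = j
  · subst h; by_cases hu : u = i <;> simp [hu, eVec, Pi.single_apply]
  · simp only [h, if_false, Pi.zero_apply]
    by_cases hu : u = i <;> by_cases hv : u = j <;> simp_all

lemma muMap_tmul' (v w : U → ℝ) : muMap U (v ⊗ₜ[ℝ] w) = v * w := rfl

lemma eps_tmul' (i j : U) : epsMap U (eVec U i ⊗ₜ[ℝ] eVec U j) = if i = j then 1 else 0 := by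
  simp only [epsMap, TensorProduct.lift.tmul, LinearMap.mk₂_apply, eVec, Pi.single_apply]
  by_cases h : i = j
  · subst h; simp
  · rw [if_neg h, Finset.sum_eq_zero]
    intro u _
    by_cases hu : u = i <;> by_cases hv : u = j <;> simp_all

end Helpers

set_option synthInstance.maxHeartbeats 1000000 in
set_option maxHeartbeats 1000000 in
/-- truth-theoretic semantics of the possessive subject relative
    clause `Possessor whose Subject Verb Object`:
    μ( poss ⊗ 's( μ( sbj ⊗ (id_N ⊗ ε)(verb ⊗ obj) ) ) )
      = ∑_{h ∈ P} ( ∑_{k ∈ K} ∑_{l ∈ L} (if owns(h,k) then α(k,l) else 0) ) • e_h. -/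
theorem possessive_subject_semantics (U : Type*) [Fintype U] [DecidableEq U]
    (P K L : Finset U) (α : U × U → ℝ) (owns : U → U → Prop) [DecidableRel owns]
    (possS : (U → ℝ) →ₗ[ℝ] (U → ℝ))
    (hpossS : ∀ k : U, possS (eVec U k)
      = ∑ h ∈ Finset.univ.filter (fun h => owns h k), eVec U h) :
    muMap U ((∑ h ∈ P, eVec U h) ⊗ₜ[ℝ]
      possS (muMap U ((∑ k ∈ K, eVec U k) ⊗ₜ[ℝ]
        (TensorProduct.rid ℝ (U → ℝ))
          ((LinearMap.lTensor (U → ℝ) (epsMap U))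
            ((TensorProduct.assoc ℝ (U → ℝ) (U → ℝ) (U → ℝ))
              ((∑ i : U, ∑ j : U, α (i, j) • (eVec U i ⊗ₜ[ℝ] eVec U j)) ⊗ₜ[ℝ]
                (∑ l ∈ L, eVec U l)))))))
    = ∑ h ∈ P, (∑ k ∈ K, ∑ l ∈ L, if owns h k then α (k, l) else 0) • eVec U h := by
  have hV : (TensorProduct.rid ℝ (U → ℝ))
          ((LinearMap.lTensor (U → ℝ) (epsMap U))
            ((TensorProduct.assoc ℝ (U → ℝ) (U → ℝ) (U → ℝ))
              ((∑ i : U, ∑ j : U, α (i, j) • (eVec U i ⊗ₜ[ℝ] eVec U j)) ⊗ₜ[ℝ]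
                (∑ l ∈ L, eVec U l))))
      = ∑ i : U, (∑ l ∈ L, α (i, l)) • eVec U i := by
    simp only [sum_tmul, smul_tmul', map_sum, map_smul, tmul_sum, assoc_tmul,
      LinearMap.lTensor_tmul, eps_tmul', rid_tmul, TensorProduct.tmul_ite,
      TensorProduct.tmul_zero, apply_ite, map_zero]
    simp only [Finset.sum_ite_eq', Finset.mem_univ, if_true, one_smul]
    rw [Finset.sum_comm]
    exact Finset.sum_congr rfl fun i _ => Finset.sum_smul.symm
  rw [hV]
  have h1 : muMap U ((∑ k ∈ K, eVec U k) ⊗ₜ[ℝ] (∑ i : U, (∑ l ∈ L, α (i, l)) • eVec U i))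
      = ∑ k ∈ K, (∑ l ∈ L, α (k, l)) • eVec U k := by
    simp only [sum_tmul, tmul_sum, tmul_smul, map_sum, map_smul, muMap_tmul', eVec_mul',
      smul_ite, smul_zero, Finset.sum_ite_eq']
    rw [Finset.sum_ite_mem, Finset.univ_inter]
  rw [h1, map_sum]
  simp only [map_smul, hpossS, tmul_sum, tmul_smul, sum_tmul, map_sum, map_smul, muMap_tmul',
    eVec_mul', Finset.smul_sum, smul_ite, smul_zero]
  simp only [Finset.sum_ite_eq', Finset.sum_filter]
  rw [Finset.sum_comm]
  rw [show (∑ h ∈ P, (∑ k ∈ K, ∑ l ∈ L, if owns h k then α (k, l) else 0) • eVec U h)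
      = ∑ h : U, if h ∈ P then (∑ k ∈ K, ∑ l ∈ L, if owns h k then α (k, l) else 0) • eVec U h else 0 by
    rw [Finset.sum_ite_mem, Finset.univ_inter]]
  refine Finset.sum_congr rfl fun h _ => ?_
  by_cases hP : h ∈ P
  · simp only [hP, if_true, Finset.sum_smul]
    refine Finset.sum_congr rfl fun k _ => ?_
    by_cases ho : owns h k <;> simp [ho, Finset.sum_smul]
  · simp [hP]
end

section
/- Proposition (decomposition of 'whose', subject case): for all poss, sbj, obj ∈ N, the meaning of 'Possessor that has Subject that Verb Object', obtained by applying the subject-relative-pronoun semantics twice — namely the vector h ↦ poss(h) · ∑_{σ ∈ Σ, k ∈ U} H(h,σ,k) · ( sbj(k) · ∑_{σ' ∈ Σ, l ∈ U} W(k,σ',l) · obj(l) ) — equals the meaning of 'Possessor whose Subject Verb Object' with ownership map 's given by the has-tensor with its sentence dimension discarded, 's(h,k) = ∑_{σ ∈ Σ} H(h,σ,k) — namely the vector h ↦ poss(h) · ∑_{k ∈ U} 's(h,k) · ( sbj(k) · ∑_{σ' ∈ Σ, l ∈ U} W(k,σ',l) · obj(l) ). -/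
/-- decomposition of `whose` (subject case):
    the meaning of `Possessor that has Subject that Verb Object`, obtained by
    applying the subject-relative-pronoun semantics twice, equals the meaning of
    `Possessor whose Subject Verb Object` where the ownership map 's is the
    has-tensor with its sentence dimension discarded: 's(h,k) = ∑_σ H(h,σ,k). -/
theorem whose_decomposition_subject (U Sig : Type*) [Fintype U] [Fintype Sig]
    (W H : U × Sig × U → ℝ) (poss sbj obj : U → ℝ) :
    (fun h : U => poss h *
        ∑ σ : Sig, ∑ k : U, H (h, σ, k) *
          (sbj k * ∑ σ' : Sig, ∑ l : U, W (k, σ', l) * obj l))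
    = (fun h : U => poss h *
        ∑ k : U, (∑ σ : Sig, H (h, σ, k)) *
          (sbj k * ∑ σ' : Sig, ∑ l : U, W (k, σ', l) * obj l)) := by
  funext h
  rw [Finset.sum_comm]
  simp [Finset.sum_mul]
end

section
/- Proposition (0/1 truth-theoretic interpretation, object case): suppose the verb degrees are 0/1-valued, i.e. α(k,l) = 1 if (k,l) ∈ R and 0 otherwise for a relation R ⊆ U × U. Then the h-coordinate of the meaning vector m = μ( χ_P ⊗ 's( μ( (ε ⊗ id_N)(χ_K ⊗ verb) ⊗ χ_L ) ) ) equals the number of pairs (k,l) ∈ K × L with owns(h,l) and R(k,l) when h ∈ P, and equals 0 when h ∉ P; consequently the support of m equals the Montague interpretation of the clause, { h ∈ P | ∃ l ∈ L, owns(h,l) ∧ ∃ k ∈ K, R(k,l) }. -/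
open TensorProduct

set_option synthInstance.maxHeartbeats 1000000 in
set_option maxHeartbeats 1000000 in
/-- 0/1 truth-theoretic interpretation (object case): if the verb
    degrees are 0/1-valued, given by a relation R, then for h ∈ P the h-coordinate
    of m = μ( χ_P ⊗ 's( μ( (ε ⊗ id_N)(χ_K ⊗ verb) ⊗ χ_L ) ) ) counts the pairs
    (k,l) ∈ K × L with owns(h,l) and R(k,l), for h ∉ P it is 0, and the support of
    m is the Montague interpretation { h ∈ P | ∃ l ∈ L, owns(h,l) ∧ ∃ k ∈ K, R(k,l) }. -/
theorem possessive_object_truth_theoretic (U : Type*) [Fintype U] [DecidableEq U]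
    (P K L : Finset U) (α : U × U → ℝ)
    (owns : U → U → Prop) [DecidableRel owns]
    (R : U → U → Prop) [DecidableRel R]
    (hα : ∀ k l : U, α (k, l) = if R k l then 1 else 0)
    (possS : (U → ℝ) →ₗ[ℝ] (U → ℝ))
    (hpossS : ∀ l : U, possS (eVec U l)
      = ∑ h ∈ Finset.univ.filter (fun h => owns h l), eVec U h)
    (m : U → ℝ)
    (hm : m = muMap U ((∑ h ∈ P, eVec U h) ⊗ₜ[ℝ]
      possS (muMap U
        (((TensorProduct.lid ℝ (U → ℝ))
            ((LinearMap.rTensor (U → ℝ) (epsMap U))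
              ((TensorProduct.assoc ℝ (U → ℝ) (U → ℝ) (U → ℝ)).symm
                ((∑ k ∈ K, eVec U k) ⊗ₜ[ℝ]
                  (∑ i : U, ∑ j : U, α (i, j) • (eVec U i ⊗ₜ[ℝ] eVec U j)))))) ⊗ₜ[ℝ]
          (∑ l ∈ L, eVec U l))))) :
    (∀ h : U, h ∈ P →
        m h = (((K ×ˢ L).filter (fun p => owns h p.2 ∧ R p.1 p.2)).card : ℝ)) ∧
    (∀ h : U, h ∉ P → m h = 0) ∧
    {h : U | m h ≠ 0} = {h : U | h ∈ P ∧ ∃ l ∈ L, owns h l ∧ ∃ k ∈ K, R k l} := by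
  classical
  set c : U → ℝ := fun j => ∑ k ∈ K, α (k, j) with hc
  have hA : (TensorProduct.lid ℝ (U → ℝ))
            ((LinearMap.rTensor (U → ℝ) (epsMap U))
              ((TensorProduct.assoc ℝ (U → ℝ) (U → ℝ) (U → ℝ)).symm
                ((∑ k ∈ K, eVec U k) ⊗ₜ[ℝ]
                  (∑ i : U, ∑ j : U, α (i, j) • (eVec U i ⊗ₜ[ℝ] eVec U j)))))
        = ∑ j : U, c j • eVec U j := by
    simp only [hc]
    simp [TensorProduct.tmul_sum, TensorProduct.tmul_smul, map_sum, map_smul,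
      TensorProduct.assoc_symm_tmul, epsMap, eVec,
      TensorProduct.sum_tmul, TensorProduct.lid_tmul, Pi.single_apply, Finset.smul_sum]
    rw [Finset.sum_comm]
    simp [Finset.sum_smul]
  have hB : muMap U ((∑ j : U, c j • eVec U j) ⊗ₜ[ℝ] (∑ l ∈ L, eVec U l))
      = ∑ l ∈ L, c l • eVec U l := by
    funext u
    simp [muMap, eVec, Pi.single_apply, Finset.sum_apply, mul_comm]
  have hmh : ∀ h : U, m h = (if h ∈ P then (1:ℝ) else 0) *
      ∑ l ∈ L, c l * (if owns h l then 1 else 0) := by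
    intro h
    rw [hm, hA, hB]
    simp only [map_sum, map_smul, hpossS]
    simp [muMap, eVec, Pi.single_apply, Finset.sum_apply, Finset.mul_sum, mul_comm]
    by_cases hP : h ∈ P <;> simp [hP]
  have hcard : ∀ h : U, (((K ×ˢ L).filter (fun p => owns h p.2 ∧ R p.1 p.2)).card : ℝ)
      = ∑ l ∈ L, c l * (if owns h l then 1 else 0) := by
    intro h
    rw [Finset.card_filter]
    push_cast
    rw [Finset.sum_product, Finset.sum_comm]
    simp only [hc, hα, Finset.sum_mul]
    refine Finset.sum_congr rfl fun l _ => Finset.sum_congr rfl fun k _ => ?_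
    by_cases h1 : owns h l <;> by_cases h2 : R k l <;> simp [h1, h2]
  refine ⟨fun h hP => by rw [hmh h, hcard h]; simp [hP], fun h hP => by simp [hmh h, hP], ?_⟩
  ext h
  by_cases hP : h ∈ P
  · simp only [Set.mem_setOf_eq, hmh h, hP, if_pos, one_mul, ← hcard h]
    rw [Nat.cast_ne_zero, Finset.card_ne_zero, Finset.filter_nonempty_iff]
    simp only [Finset.mem_product, Prod.exists, true_and]
    constructor
    · rintro ⟨k, l, ⟨hk, hl⟩, ho, hr⟩; exact ⟨l, hl, ho, k, hk, hr⟩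
    · rintro ⟨l, hl, ho, k, hk, hr⟩; exact ⟨k, l, ⟨hk, hl⟩, ho, hr⟩
  · simp [hmh h, hP]
end
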